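/- Let C_0 be an [n,t] linear code over F_q, Δ < t, and suppose there exists an [n, k = t-Δ] maximally recoverable subcode C of C_0. Then there exists an [n+Δ, t] extension code C_0^{(e)} of C_0, with generator matrix [G_0 | Q'] for some t×Δ matrix Q', such that for every S ⊆ [n] with |S| = t - Δ, rank(G_0^{(e)}|_{S ∪ {n+1,...,n+Δ}}) = rank(G_0|_S) + Δ. -/

import Mathlib

/-! Write `G = M * G0`. Take for the columns of `Q'` a basis of `ker M`, which has dimension `Δ`;
then the claim says that `ker M` meets the span of the columns of `G0` indexed by `S` only in `0`.
Extending a basis of that span by further columns of `G0` gives `t - Δ` independent columns;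
maximal recoverability says that `M` keeps them independent, so `M` is injective on their span. -/

open Matrix

section Defs
variable {F : Type*} [Field F]

/-- Rank of the submatrix of `G` consisting of the columns indexed by `S`. -/
noncomputable def colRank {m α : Type*} [Fintype α] (G : Matrix m α F) (S : Finset α) : ℕ :=
  (G.submatrix id (fun j : S => (j : α))).rank

/-- The row space of a matrix. -/
def rowSpan {m α : Type*} (G : Matrix m α F) : Submodule F (α → F) :=
  Submodule.span F (Set.range fun i => G i)

/-- Rank of the restriction (puncturing) of a code `C` to the coordinates in `S`. -/
noncomputable def restrRank {α : Type*} (C : Submodule F (α → F)) (S : Finset α) : ℕ :=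
  Module.finrank F (C.map (LinearMap.funLeft F F (fun j : S => (j : α))))

/-- Shortening of a code on coordinates `α ⊕ β` to the coordinates `α`. -/
noncomputable def shortenSum {α β : Type*} (D : Submodule F ((α ⊕ β) → F)) :
    Submodule F (α → F) :=
  Submodule.map (LinearMap.funLeft F F Sum.inl)
    (D ⊓ (⨅ j : β, LinearMap.ker
      (LinearMap.proj (R := F) (Sum.inr j) : ((α ⊕ β) → F) →ₗ[F] F)))

/-- A valid (zero-error, worst case) scheme for the point-to-point function-update problem. -/
def IsValidScheme [DecidableEq F] {n m ℓ : ℕ} (A : Matrix (Fin m) (Fin n) F)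
    (H : Matrix (Fin ℓ) (Fin n) F) (ε : ℕ)
    (D : (Fin ℓ → F) → (Fin m → F) → (Fin m → F)) : Prop :=
  ∀ X E : Fin n → F, hammingNorm E ≤ ε →
    D (H.mulVec (X + E)) (A.mulVec X) = A.mulVec (X + E)

end Defs

open Module Submodule

section LinearIndepOn

variable {K ι V W : Type*} [Field K] [AddCommGroup V] [Module K V] [AddCommGroup W] [Module K W]
  {v : ι → V}

theorem LinearIndepOn.finrank_span_image_finset {s : Finset ι} (hs : LinearIndepOn K v s) :
    finrank K (span K (v '' s)) = s.card := by
  rw [Set.image_eq_range, finrank_span_eq_card hs]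
  simp

theorem exists_linearIndepOn_finset_card_eq [Fintype ι] (s : Finset ι) {k : ℕ}
    (hs : finrank K (span K (v '' s)) ≤ k) (hk : k ≤ finrank K (span K (Set.range v))) :
    ∃ t : Finset ι, t.card = k ∧ LinearIndepOn K v t ∧ span K (v '' s) ≤ span K (v '' t) := by
  classical
  obtain ⟨b, hbs, -, hsb, hb⟩ := exists_linearIndepOn_extension (linearIndepOn_empty K v)
    (Set.empty_subset (s : Set ι))
  obtain ⟨c, -, hbc, hc_span, hc⟩ := exists_linearIndepOn_extension hb (Set.subset_univ b)
  have hb_span : span K (v '' s) = span K (v '' b) :=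
    le_antisymm (span_le.2 hsb) (span_mono (Set.image_mono hbs))
  have hb_card : b.toFinset.card ≤ k := by
    rw [← LinearIndepOn.finrank_span_image_finset (s := b.toFinset) (by simpa using hb),
      Set.coe_toFinset, ← hb_span]
    exact hs
  have hc_card : k ≤ c.toFinset.card := by
    rw [← LinearIndepOn.finrank_span_image_finset (s := c.toFinset) (by simpa using hc),
      Set.coe_toFinset]
    have hc_top : span K (v '' c) = span K (Set.range v) :=
      le_antisymm (span_mono (Set.image_subset_range v c)) (span_le.2 (by simpa using hc_span))
    rwa [hc_top]
  obtain ⟨t, hbt, htc, ht⟩ :=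
    Finset.exists_subsuperset_card_eq (Set.toFinset_subset_toFinset.2 hbc) hb_card hc_card
  refine ⟨t, ht, hc.mono (by simpa using htc), ?_⟩
  rw [hb_span]
  exact span_mono (Set.image_mono (by simpa using hbt))

theorem disjoint_span_image_ker_of_linearIndepOn_comp [Fintype ι] (f : V →ₗ[K] W) {k : ℕ}
    (hk : k ≤ finrank K (span K (Set.range v)))
    (hf : ∀ t : Finset ι, t.card = k → LinearIndepOn K v t → LinearIndepOn K (f ∘ v) t)
    (s : Finset ι) (hs : finrank K (span K (v '' s)) ≤ k) :
    Disjoint (span K (v '' s)) (LinearMap.ker f) := by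
  obtain ⟨t, ht, hvt, hst⟩ := exists_linearIndepOn_finset_card_eq s hs hk
  refine Disjoint.mono_left hst ?_
  rw [Set.image_eq_range]
  exact Submodule.range_ker_disjoint (hf t ht hvt)

end LinearIndepOn

namespace Matrix

variable {F m α β : Type*} [Field F]

omit [Field F] in
theorem range_col_submatrix_id (A : Matrix m α F) (S : Finset α) :
    Set.range (A.submatrix id fun j : S => (j : α)).col = A.col '' S := by
  rw [Set.image_eq_range]
  rfl

theorem colRank_eq_finrank_span_image [Fintype α] (A : Matrix m α F) (S : Finset α) :
    colRank A S = finrank F (span F (A.col '' S)) := by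
  rw [colRank, rank_eq_finrank_span_cols, range_col_submatrix_id]

theorem colRank_le_card [Fintype α] (A : Matrix m α F) (S : Finset α) : colRank A S ≤ S.card :=
  (rank_le_card_width _).trans_eq (Fintype.card_coe S)

theorem linearIndepOn_col_iff_colRank_eq_card [Fintype α] (A : Matrix m α F) (S : Finset α) :
    LinearIndepOn F A.col S ↔ colRank A S = S.card := by
  rw [LinearIndepOn, linearIndependent_iff_card_eq_finrank_span, colRank_eq_finrank_span_image,
    Set.image_eq_range]
  simp [Set.finrank, eq_comm]

theorem col_mul [Fintype m] {l : Type*} (M : Matrix l m F) (A : Matrix m α F) (j : α) :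
    (M * A).col j = M *ᵥ A.col j := by
  ext i
  simp [col_apply, mul_apply, mulVec, dotProduct]

theorem rank_fromCols [Fintype m] [Fintype α] [Fintype β] (A : Matrix m α F) (B : Matrix m β F) :
    (fromCols A B).rank =
      finrank F (span F (Set.range A.col) ⊔ span F (Set.range B.col) : Submodule F (m → F)) := by
  have : (fromCols A B).col = Sum.elim A.col B.col := by
    ext (j | j) i <;> rfl
  rw [rank_eq_finrank_span_cols, this, Set.Sum.elim_range, span_union]

theorem exists_mul_eq_of_forall_mem_rowSpan [Fintype m] {l : Type*} {A : Matrix m α F}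
    {B : Matrix l α F} (h : ∀ i, B i ∈ rowSpan A) : ∃ M : Matrix l m F, M * A = B := by
  choose c hc using fun i => (mem_span_range_iff_exists_fun F).mp (h i)
  refine ⟨Matrix.of c, ?_⟩
  ext i j
  simpa [mul_apply, Finset.sum_apply] using congrFun (hc i) j

theorem exists_span_range_col_eq [Fintype m] {d : ℕ} (U : Submodule F (m → F))
    (hU : finrank F U = d) :
    ∃ Q : Matrix m (Fin d) F, span F (Set.range Q.col) = U := by
  let b := Module.finBasisOfFinrankEq F U hU
  refine ⟨Matrix.of fun i j => (b j : m → F) i, ?_⟩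
  have : Set.range (Matrix.of fun i j => (b j : m → F) i).col = U.subtype '' Set.range b := by
    rw [← Set.range_comp]
    rfl
  rw [this, ← map_span, b.span_eq, map_subtype_top]

end Matrix

theorem mrsc_gives_extension_general {F : Type*} [Field F]
    {n t Δ : ℕ} (hΔ : Δ < t)
    (G0 : Matrix (Fin t) (Fin n) F) (hG0 : G0.rank = t)
    (G : Matrix (Fin (t - Δ)) (Fin n) F) (hG : G.rank = t - Δ)
    (hsub : ∀ i, G i ∈ rowSpan G0)
    (hmrsc : ∀ S : Finset (Fin n), S.card = t - Δ → colRank G0 S = t - Δ →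
      colRank G S = t - Δ) :
    ∃ Q' : Matrix (Fin t) (Fin Δ) F, ∀ S : Finset (Fin n), S.card = t - Δ →
      (Matrix.fromCols (G0.submatrix id (fun j : S => (j : Fin n))) Q').rank =
        colRank G0 S + Δ := by
  obtain ⟨M, rfl⟩ := exists_mul_eq_of_forall_mem_rowSpan hsub
  have hM : M.rank = t - Δ :=
    le_antisymm (rank_le_height M) (hG.symm.trans_le (rank_mul_le_left M G0))
  have hK : finrank F (LinearMap.ker M.mulVecLin) = Δ := by
    have := LinearMap.finrank_range_add_finrank_ker M.mulVecLin
    rw [Module.finrank_fin_fun] at this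
    unfold Matrix.rank at hM
    omega
  obtain ⟨Q', hQ'⟩ := exists_span_range_col_eq _ hK
  refine ⟨Q', fun S hS => ?_⟩
  have hk : t - Δ ≤ finrank F (span F (Set.range G0.col)) := by
    rw [← rank_eq_finrank_span_cols, hG0]
    exact Nat.sub_le t Δ
  have hS_le : finrank F (span F (G0.col '' S)) ≤ t - Δ := by
    rw [← colRank_eq_finrank_span_image, ← hS]
    exact colRank_le_card G0 S
  have hdisj : Disjoint (span F (G0.col '' S)) (LinearMap.ker M.mulVecLin) := by
    refine disjoint_span_image_ker_of_linearIndepOn_comp M.mulVecLin hk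
      (fun T hT hT_indep => ?_) S hS_le
    have hcol : M.mulVecLin ∘ G0.col = (M * G0).col := funext fun j => (col_mul M G0 j).symm
    rw [linearIndepOn_col_iff_colRank_eq_card, hT] at hT_indep
    rw [hcol, linearIndepOn_col_iff_colRank_eq_card, hT]
    exact hmrsc T hT hT_indep
  have hsum := Submodule.finrank_sup_add_finrank_inf_eq (span F (G0.col '' S))
    (LinearMap.ker M.mulVecLin)
  rw [hdisj.eq_bot, finrank_bot, add_zero, hK] at hsum
  rw [rank_fromCols, range_col_submatrix_id, hQ', colRank_eq_finrank_span_image, hsum]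

/-- converse: if `C₀` has an `[n, t-Δ]` MRSC, then `C₀` has an extension
`[G0 | Q']` satisfying the rank condition of Lemma MRSC-via-shortening. -/
theorem mrsc_gives_extension {F : Type*} [Field F] [Fintype F]
    {n t Δ : ℕ} (hΔ : Δ < t)
    (G0 : Matrix (Fin t) (Fin n) F) (hG0 : G0.rank = t)
    (G : Matrix (Fin (t - Δ)) (Fin n) F) (hG : G.rank = t - Δ)
    (hsub : ∀ i, G i ∈ rowSpan G0)
    (hmrsc : ∀ S : Finset (Fin n), S.card = t - Δ → colRank G0 S = t - Δ →
      colRank G S = t - Δ) :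
    ∃ Q' : Matrix (Fin t) (Fin Δ) F, ∀ S : Finset (Fin n), S.card = t - Δ →
      (Matrix.fromCols (G0.submatrix id (fun j : S => (j : Fin n))) Q').rank =
        colRank G0 S + Δ :=
  mrsc_gives_extension_general hΔ G0 hG0 G hG hsub hmrsc
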